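/- Suppose under gradient descent with the NLL loss on softmax regression, an allowed logit z_ι(t) satisfies z_ι(t) ≥ z_ι(0) and for another allowed index j with initial probability ratio c = p_j(0)/p_ι(0) > 1 the ratio p_j(t)/p_ι(t) ≥ c for all t. Then z_j(T) ≥ z_j(0) - c·z_ι(0) + c·z_ι(T) for all T, and if z_ι(t) → ∞ then exp(z_ι(t) - z_j(t)) → 0, i.e. the limiting probability ratio p_ι/p_j tends to 0. -/

import Mathlib

/-!
Both logits move by the same nonnegative step sizes `λ (1/p̂ - 1)`, multiplied by `p_j`
resp. `p_ι`. Since `p_j ≥ c p_ι` at every step, each increment of `z_j` is at least `c`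
times the corresponding increment of `z_ι`, which sums to the linear lower bound. Then
`z_ι - z_j ≤ (1 - c) z_ι + const` with `1 - c < 0`, so `z_ι → ∞` forces the exponent to `-∞`.
-/

open Filter Topology

noncomputable def softmax {m : ℕ} (z : Fin m → ℝ) (i : Fin m) : ℝ :=
  Real.exp (z i) / ∑ k, Real.exp (z k)

theorem softmax_pos {m : ℕ} (z : Fin m → ℝ) (i : Fin m) : 0 < softmax z i :=
  div_pos (Real.exp_pos _)
    (Finset.sum_pos (fun k _ => Real.exp_pos (z k)) ⟨i, Finset.mem_univ i⟩)

theorem mul_sum_mul_le_sum_mul {α : Type*} {s : Finset α} {w a b : α → ℝ} {c : ℝ}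
    (hw : ∀ t ∈ s, 0 ≤ w t) (hab : ∀ t ∈ s, c * b t ≤ a t) :
    c * ∑ t ∈ s, w t * b t ≤ ∑ t ∈ s, w t * a t := by
  rw [Finset.mul_sum]
  refine Finset.sum_le_sum fun t ht => ?_
  calc c * (w t * b t) = w t * (c * b t) := by ring
    _ ≤ w t * a t := mul_le_mul_of_nonneg_left (hab t ht) (hw t ht)

theorem tendsto_exp_sub_nhds_zero_of_add_mul_le {α : Type*} {l : Filter α} {u v : α → ℝ}
    {a c : ℝ} (hc : 1 < c) (hu : Tendsto u l atTop) (hv : ∀ t, a + c * u t ≤ v t) :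
    Tendsto (fun t => Real.exp (u t - v t)) l (𝓝 0) := by
  have hbound : ∀ t, u t - v t ≤ (1 - c) * u t + -a := fun t => by linarith [hv t]
  have hlin : Tendsto (fun t => (1 - c) * u t + -a) l atBot :=
    tendsto_atBot_add_const_right l _ (hu.const_mul_atTop_of_neg (by linarith))
  exact Real.tendsto_exp_atBot.comp (tendsto_atBot_mono hbound hlin)

theorem nll_ratio_lower_bound_general {m : ℕ}
    (lam : ℝ) (hlam : 0 < lam)
    (z : ℕ → Fin m → ℝ)
    (p : ℕ → Fin m → ℝ) (hp : ∀ t, p t = softmax (z t))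
    (phat : ℕ → ℝ)
    (hphat0 : ∀ t, 0 < phat t) (hphat1 : ∀ t, phat t < 1)
    (j ι : Fin m)
    (hupdj : ∀ T, z T j = z 0 j
      + lam * ∑ t ∈ Finset.range T, (1 / phat t - 1) * p t j)
    (hupdι : ∀ T, z T ι = z 0 ι
      + lam * ∑ t ∈ Finset.range T, (1 / phat t - 1) * p t ι)
    (c : ℝ) (hc1 : 1 < c)
    (hratio : ∀ t, c ≤ p t j / p t ι) :
    (∀ T, z 0 j - c * z 0 ι + c * z T ι ≤ z T j) ∧
    (Tendsto (fun t => z t ι) atTop atTop →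
      Tendsto (fun t => Real.exp (z t ι - z t j)) atTop (𝓝 0)) := by
  have hstep : ∀ t, 0 ≤ 1 / phat t - 1 := fun t =>
    sub_nonneg.2 (one_le_one_div (hphat0 t) (hphat1 t).le)
  have hdom : ∀ t, c * p t ι ≤ p t j := fun t =>
    (le_div_iff₀ (hp t ▸ softmax_pos (z t) ι)).1 (hratio t)
  have hlower : ∀ T, z 0 j - c * z 0 ι + c * z T ι ≤ z T j := by
    intro T
    have hsum := mul_sum_mul_le_sum_mul (s := Finset.range T) (fun t _ => hstep t)
      (fun t _ => hdom t)
    rw [hupdj T, hupdι T]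
    linarith [mul_le_mul_of_nonneg_left hsum hlam.le]
  exact ⟨hlower, fun hι_top => tendsto_exp_sub_nhds_zero_of_add_mul_le hc1 hι_top hlower⟩

/-- under NLL gradient descent, with `c = p_j(0)/p_ι(0) > 1` and the
ratio `p_j(t)/p_ι(t) ≥ c` maintained, the allowed logit satisfies
`z_j(T) ≥ z_j(0) - c z_ι(0) + c z_ι(T)`, and if `z_ι(t) → ∞` then
`exp(z_ι(t) - z_j(t)) → 0`. -/
theorem nll_ratio_lower_bound {m : ℕ} (y : Fin m → ℝ)
    (hy : ∀ i, y i = 0 ∨ y i = 1)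
    (lam : ℝ) (hlam : 0 < lam)
    (z : ℕ → Fin m → ℝ)
    (p : ℕ → Fin m → ℝ) (hp : ∀ t, p t = softmax (z t))
    (phat : ℕ → ℝ) (hphat : ∀ t, phat t = ∑ i, y i * p t i)
    (hphat0 : ∀ t, 0 < phat t) (hphat1 : ∀ t, phat t < 1)
    (j ι : Fin m) (hj : y j = 1) (hι : y ι = 1)
    (hupdj : ∀ T, z T j = z 0 j
      + lam * ∑ t ∈ Finset.range T, (1 / phat t - 1) * p t j)
    (hupdι : ∀ T, z T ι = z 0 ι
      + lam * ∑ t ∈ Finset.range T, (1 / phat t - 1) * p t ι)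
    (c : ℝ) (hc : c = p 0 j / p 0 ι) (hc1 : 1 < c)
    (hratio : ∀ t, c ≤ p t j / p t ι) :
    (∀ T, z 0 j - c * z 0 ι + c * z T ι ≤ z T j) ∧
    (Tendsto (fun t => z t ι) atTop atTop →
      Tendsto (fun t => Real.exp (z t ι - z t j)) atTop (𝓝 0)) :=
  nll_ratio_lower_bound_general lam hlam z p hp phat hphat0 hphat1 j ι hupdj hupdι c hc1 hratio
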